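/- Let p, q be coprime positive integers and k a positive integer, and let Λ_{k,q,1} = (1/(2k))ℤ × ℤ⁴ × 2πqℤ, a lattice of Osc₂(1, p/q). Then the normalizer of Λ_{k,q,1} in Osc₂(1, p/q) is N(Λ_{k,q,1}) = ℝ × (1/(2k))ℤ⁴ × (qπ/2)ℤ, i.e. an element g = (z, v, t) satisfies gΛ_{k,q,1}g⁻¹ = Λ_{k,q,1} if and only if v ∈ (1/(2k))ℤ⁴ and t ∈ (qπ/2)ℤ. -/

import Mathlib

open Real

noncomputable section

/-- rotation by angle `θ` acting on `ℝ × ℝ` -/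
def rot (θ : ℝ) (p : ℝ × ℝ) : ℝ × ℝ :=
  (Real.cos θ * p.1 - Real.sin θ * p.2, Real.sin θ * p.1 + Real.cos θ * p.2)

/-- the matrix `[[0,1],[-1,0]]` acting on `ℝ × ℝ` -/
def Jpair (p : ℝ × ℝ) : ℝ × ℝ := (p.2, -p.1)

/-- euclidean inner product on `ℝ × ℝ` -/
def dot2 (p q : ℝ × ℝ) : ℝ := p.1 * q.1 + p.2 * q.2

/-- underlying set `ℝ × ℝ^{2n} × ℝ` of the oscillator group, where the middle
factor `ℝ^{2n}` is recorded as `n` pairs `(x_i, y_i)`. -/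
abbrev OscG (n : ℕ) := ℝ × (Fin n → ℝ × ℝ) × ℝ

/-- multiplication of the oscillator group `Osc_n(λ₁,…,λₙ)`:
`(z₁,v₁,t₁)·(z₂,v₂,t₂) = (z₁+z₂+½ v₁ᵀ J R(t₁) v₂, v₁ + R(t₁)v₂, t₁+t₂)`,
where `R(t)` rotates the `i`-th pair by the angle `λ_i t`. -/
def oscMul {n : ℕ} (lam : Fin n → ℝ) (g h : OscG n) : OscG n :=
  (g.1 + h.1 + (1/2) * ∑ i, dot2 (g.2.1 i) (Jpair (rot (lam i * g.2.2) (h.2.1 i))),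
   fun i => g.2.1 i + rot (lam i * g.2.2) (h.2.1 i),
   g.2.2 + h.2.2)

/-- identity element of the oscillator group -/
def oscOne (n : ℕ) : OscG n := (0, fun _ => (0, 0), 0)

/-- inverse in the oscillator group: `(z,v,t)⁻¹ = (-z, -R(-t)v, -t)` -/
def oscInv {n : ℕ} (lam : Fin n → ℝ) (g : OscG n) : OscG n :=
  (-g.1, fun i => -(rot (lam i * (-g.2.2)) (g.2.1 i)), -g.2.2)

/-- `Γ` is a lattice of the oscillator group: a discrete subgroup with compact
quotient (the quotient by the right multiplication action of `Γ`). -/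
structure IsLattice {n : ℕ} (lam : Fin n → ℝ) (Γ : Set (OscG n)) : Prop where
  one_mem : oscOne n ∈ Γ
  mul_mem : ∀ g ∈ Γ, ∀ h ∈ Γ, oscMul lam g h ∈ Γ
  inv_mem : ∀ g ∈ Γ, oscInv lam g ∈ Γ
  discrete : DiscreteTopology Γ
  cocompact : CompactSpace (Quot (fun g h : OscG n => ∃ γ ∈ Γ, h = oscMul lam g γ))

/-- `Q(X) = 2ad + Σ_k (b_k² + c_k²)/λ_k` for `X = (d,(b₁,c₁,…,bₙ,cₙ),a)` -/
def Qform {n : ℕ} (lam : Fin n → ℝ) (d a : ℝ) (b c : Fin n → ℝ) : ℝ :=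
  2 * a * d + ∑ k, (b k ^ 2 + c k ^ 2) / lam k

/-- the geodesic through the identity with initial velocity
`X = (d,(b₁,c₁,…,bₙ,cₙ),a)` for the bi-invariant Lorentzian metric on the
oscillator group. -/
def geo {n : ℕ} (lam : Fin n → ℝ) (d : ℝ) (b c : Fin n → ℝ) (a : ℝ) (s : ℝ) : OscG n :=
  if a = 0 then (d * s, fun j => (b j * s, c j * s), 0)
  else
    ((d + (1/(2*a)) * ∑ k, (b k ^ 2 + c k ^ 2) / lam k) * s
        - (1/(2*a^2)) * ∑ k, ((b k ^ 2 + c k ^ 2) / (lam k)^2) * Real.sin (lam k * a * s),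
     fun j => ((1/(a * lam j)) * (b j * Real.sin (lam j * a * s)
                  + c j * Real.cos (lam j * a * s) - c j),
               (1/(a * lam j)) * (-(b j) * Real.cos (lam j * a * s)
                  + c j * Real.sin (lam j * a * s) + b j)),
     a * s)

/-- the frequencies `(1, p/q)` of the oscillator group `Osc₂(1, p/q)` -/
def lam2 (p q : ℕ) : Fin 2 → ℝ := ![1, (p : ℝ) / q]

/-- the set `(1/(2k))ℤ × ℤ⁴ × Tℤ ⊆ Osc₂(1, p/q)` -/
def LamO2 (k : ℕ) (T : ℝ) : Set (OscG 2) :=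
  {g | (∃ m : ℤ, g.1 = m / (2 * k))
    ∧ (∀ i : Fin 2, (∃ a : ℤ, (g.2.1 i).1 = a) ∧ (∃ b : ℤ, (g.2.1 i).2 = b))
    ∧ ∃ c : ℤ, g.2.2 = c * T}

/-- conjugation `γ ↦ g γ g⁻¹` in the oscillator group -/
def oscConj {n : ℕ} (lam : Fin n → ℝ) (g : OscG n) : OscG n → OscG n :=
  fun γ => oscMul lam (oscMul lam g γ) (oscInv lam g)

/-!
For `γ ∈ Λ` the last coordinate lies in `2πqℤ`, where both rotation angles `t` and `(p/q)t` are
multiples of `2π`; so conjugation by `g = (z, v, t)` acts on `Λ` by the affine map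
`(w, u, s) ↦ (w + Σᵢ ⟨vᵢ, J R(t) uᵢ⟩, R(t) u, s)`. Testing it on the basis vectors of `ℤ⁴`, it
preserves `Λ` only if `R(t)` has integer entries, i.e. `t` and `(p/q)t` lie in `(π/2)ℤ` (which by
coprimality means `t ∈ (qπ/2)ℤ`), and only if the pairings `⟨vᵢ, J R(t) e⟩` lie in `(1/(2k))ℤ`,
which forces `v ∈ (1/(2k))ℤ⁴` since `R(t)` is then invertible over `ℤ`. Conversely, under these
conditions the affine map and its inverse `(w, u, s) ↦ (w - Σᵢ ⟨vᵢ, J uᵢ⟩, R(-t) u, s)` both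
preserve `Λ`.
-/

open Set
open AddSubgroup (zmultiples)

def IsIntPair (x : ℝ × ℝ) : Prop := (∃ a : ℤ, x.1 = a) ∧ ∃ b : ℤ, x.2 = b

lemma rot_rot (a b : ℝ) (x : ℝ × ℝ) : rot a (rot b x) = rot (a + b) x := by
  simp only [rot, cos_add, sin_add, Prod.mk.injEq]
  constructor <;> ring

@[simp] lemma rot_zero (x : ℝ × ℝ) : rot 0 x = x := by
  simp [rot]

lemma rot_rot_neg (θ : ℝ) (x : ℝ × ℝ) : rot θ (rot (-θ) x) = x := by
  rw [rot_rot, add_neg_cancel, rot_zero]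

lemma rot_neg_apply (θ : ℝ) (x : ℝ × ℝ) : rot θ (-x) = -rot θ x := by
  ext <;> simp only [rot, Prod.fst_neg, Prod.snd_neg] <;> ring

lemma rot_int_mul_two_pi (n : ℤ) (x : ℝ × ℝ) : rot (n * (2 * π)) x = x := by
  have hsin : sin (n * (2 * π)) = 0 := by simpa using sin_add_int_mul_two_pi 0 n
  simp [rot, cos_int_mul_two_pi, hsin]

lemma dot2_add_Jpair_neg (v r : ℝ × ℝ) : dot2 (v + r) (Jpair (-v)) = dot2 v (Jpair r) := by
  simp only [dot2, Jpair, Prod.fst_add, Prod.snd_add, Prod.fst_neg, Prod.snd_neg]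
  ring

lemma exists_int_cos_sin_int_mul_pi_div_two (n : ℤ) :
    ∃ a b : ℤ, cos (n * (π / 2)) = a ∧ sin (n * (π / 2)) = b := by
  induction n using Int.induction_on with
  | zero => exact ⟨1, 0, by simp⟩
  | succ n ih =>
    obtain ⟨a, b, ha, hb⟩ := ih
    have e : (((n : ℤ) + 1 : ℤ) : ℝ) * (π / 2) = ((n : ℤ) : ℝ) * (π / 2) + π / 2 := by
      push_cast; ring
    exact ⟨-b, a, by rw [e, cos_add_pi_div_two, hb]; push_cast; ring,
      by rw [e, sin_add_pi_div_two, ha]⟩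
  | pred n ih =>
    obtain ⟨a, b, ha, hb⟩ := ih
    have e : ((-(n : ℤ) - 1 : ℤ) : ℝ) * (π / 2) = ((-(n : ℤ) : ℤ) : ℝ) * (π / 2) - π / 2 := by
      push_cast; ring
    exact ⟨b, -a, by rw [e, cos_sub_pi_div_two, hb],
      by rw [e, sin_sub_pi_div_two, ha]; push_cast; ring⟩

lemma exists_int_mul_pi_div_two_of_cos_sin {θ : ℝ} {a b : ℤ} (ha : cos θ = a) (hb : sin θ = b) :
    ∃ n : ℤ, θ = n * (π / 2) := by
  have hab : a ^ 2 + b ^ 2 = 1 := by exact_mod_cast ha ▸ hb ▸ cos_sq_add_sin_sq θ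
  -- `|2ab| ≤ a² + b² = 1` and `2ab` is even
  have hab0 : a * b = 0 := by
    have : -1 ≤ 2 * (a * b) ∧ 2 * (a * b) ≤ 1 := by
      constructor <;> nlinarith [sq_nonneg (a + b), sq_nonneg (a - b)]
    omega
  obtain ⟨n, hn⟩ := sin_eq_zero_iff.1 (show sin (2 * θ) = 0 by
    rw [sin_two_mul, ha, hb, mul_assoc, mul_comm (b : ℝ), ← Int.cast_mul, hab0]; simp)
  exact ⟨n, by linarith⟩

lemma IsIntPair.rot {θ : ℝ} (hθ : ∃ n : ℤ, θ = n * (π / 2)) {x : ℝ × ℝ} (hx : IsIntPair x) :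
    IsIntPair (rot θ x) := by
  obtain ⟨n, rfl⟩ := hθ
  obtain ⟨A, B, hA, hB⟩ := exists_int_cos_sin_int_mul_pi_div_two n
  obtain ⟨⟨a, ha⟩, b, hb⟩ := hx
  exact ⟨⟨A * a - B * b, by simp [_root_.rot, hA, hB, ha, hb]⟩,
    ⟨B * a + A * b, by simp [_root_.rot, hA, hB, ha, hb]⟩⟩

lemma mem_zmultiples_inv_iff {d x : ℝ} :
    x ∈ zmultiples d⁻¹ ↔ ∃ m : ℤ, x = m / d := by
  simp [AddSubgroup.mem_zmultiples_iff, div_eq_mul_inv, eq_comm]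

lemma exists_int_div_pair_iff {d : ℝ} {v : ℝ × ℝ} :
    (∃ m₁ m₂ : ℤ, v = ((m₁ : ℝ) / d, (m₂ : ℝ) / d)) ↔
      v ∈ (zmultiples d⁻¹).prod (zmultiples d⁻¹) := by
  simp only [AddSubgroup.mem_prod, mem_zmultiples_inv_iff, Prod.ext_iff, exists_and_left,
    exists_and_right]

lemma dot2_Jpair_mem {H : AddSubgroup ℝ} {v w : ℝ × ℝ} (hv : v ∈ H.prod H) (hw : IsIntPair w) :
    dot2 v (Jpair w) ∈ H := by
  obtain ⟨⟨a, ha⟩, b, hb⟩ := hw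
  rw [AddSubgroup.mem_prod] at hv
  have : dot2 v (Jpair w) = b • v.1 - a • v.2 := by
    simp only [dot2, Jpair, ha, hb, zsmul_eq_mul]; ring
  rw [this]
  exact sub_mem (zsmul_mem hv.1 b) (zsmul_mem hv.2 a)

lemma mem_prod_of_dot2_Jpair_rot_mem {H : AddSubgroup ℝ} {θ : ℝ} {v : ℝ × ℝ} {A B : ℤ}
    (hA : cos θ = A) (hB : sin θ = B) (h₁ : dot2 v (Jpair (rot θ (1, 0))) ∈ H)
    (h₂ : dot2 v (Jpair (rot θ (0, 1))) ∈ H) : v ∈ H.prod H := by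
  have hAB : (A : ℝ) ^ 2 + B ^ 2 = 1 := hA ▸ hB ▸ cos_sq_add_sin_sq θ
  have hx : dot2 v (Jpair (rot θ (1, 0))) = v.1 * B - v.2 * A := by
    simp only [dot2, Jpair, rot, hA, hB]; ring
  have hy : dot2 v (Jpair (rot θ (0, 1))) = v.1 * A + v.2 * B := by
    simp only [dot2, Jpair, rot, hA, hB]; ring
  rw [hx] at h₁
  rw [hy] at h₂
  have e₁ : v.1 = B • (v.1 * B - v.2 * A) + A • (v.1 * A + v.2 * B) := by
    simp only [zsmul_eq_mul]; linear_combination (-v.1) * hAB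
  have e₂ : v.2 = B • (v.1 * A + v.2 * B) - A • (v.1 * B - v.2 * A) := by
    simp only [zsmul_eq_mul]; linear_combination (-v.2) * hAB
  refine AddSubgroup.mem_prod.2 ⟨?_, ?_⟩
  · rw [e₁]; exact add_mem (zsmul_mem h₁ B) (zsmul_mem h₂ A)
  · rw [e₂]; exact sub_mem (zsmul_mem h₂ B) (zsmul_mem h₁ A)

lemma oscConj_of_rot_fix {n : ℕ} (lam : Fin n → ℝ) (g γ : OscG n)
    (hfix : ∀ i, rot (lam i * γ.2.2) (g.2.1 i) = g.2.1 i) :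
    oscConj lam g γ =
      (γ.1 + ∑ i, dot2 (g.2.1 i) (Jpair (rot (lam i * g.2.2) (γ.2.1 i))),
        fun i => rot (lam i * g.2.2) (γ.2.1 i), γ.2.2) := by
  obtain ⟨z, v, t⟩ := g
  obtain ⟨w, u, s⟩ := γ
  have hback : ∀ i, rot (lam i * (t + s)) (-rot (lam i * -t) (v i)) = -v i := fun i => by
    rw [rot_neg_apply, rot_rot, ← mul_add, add_neg_cancel_comm, hfix i]
  simp only [oscConj, oscMul, oscInv, hback, dot2_add_Jpair_neg]
  refine Prod.ext ?_ (Prod.ext (funext fun i => ?_) ?_)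
  · dsimp only; ring
  · dsimp only; abel
  · dsimp only; ring

lemma dot2_Jpair_rot_mem_and_isIntPair_of_mapsTo {lam : Fin 2 → ℝ} {k : ℕ} {T : ℝ} {g : OscG 2}
    (h : MapsTo (oscConj lam g) (LamO2 k T) (LamO2 k T)) (i : Fin 2) {x : ℝ × ℝ}
    (hx : IsIntPair x) :
    dot2 (g.2.1 i) (Jpair (rot (lam i * g.2.2) x)) ∈ zmultiples (2 * k : ℝ)⁻¹ ∧
      IsIntPair (rot (lam i * g.2.2) x) := by
  have hγ : ((0 : ℝ), Pi.single i x, (0 : ℝ)) ∈ LamO2 k T := by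
    refine ⟨⟨0, by simp⟩, fun j => ?_, ⟨0, by simp⟩⟩
    show IsIntPair ((Pi.single i x : Fin 2 → ℝ × ℝ) j)
    rcases eq_or_ne j i with rfl | hj
    · rwa [Pi.single_eq_same]
    · rw [Pi.single_eq_of_ne hj]
      exact ⟨⟨0, by simp⟩, 0, by simp⟩
  have hconj := h hγ
  rw [oscConj_of_rot_fix _ _ _ fun j => by simp] at hconj
  obtain ⟨hz, hu, -⟩ := hconj
  have hsum : ∑ j, dot2 (g.2.1 j) (Jpair (rot (lam j * g.2.2) ((Pi.single i x : Fin 2 → ℝ × ℝ) j)))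
      = dot2 (g.2.1 i) (Jpair (rot (lam i * g.2.2) x)) := by
    rw [Fintype.sum_eq_single i fun j hj => by simp [Pi.single_eq_of_ne hj, rot, Jpair, dot2],
      Pi.single_eq_same]
  have hu' : IsIntPair (rot (lam i * g.2.2) ((Pi.single i x : Fin 2 → ℝ × ℝ) i)) := hu i
  rw [Pi.single_eq_same] at hu'
  refine ⟨?_, hu'⟩
  rw [mem_zmultiples_inv_iff, ← hsum]
  simpa using hz

lemma mem_prod_and_exists_of_mapsTo {lam : Fin 2 → ℝ} {k : ℕ} {T : ℝ} {g : OscG 2}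
    (h : MapsTo (oscConj lam g) (LamO2 k T) (LamO2 k T)) (i : Fin 2) :
    g.2.1 i ∈ (zmultiples (2 * k : ℝ)⁻¹).prod (zmultiples (2 * k : ℝ)⁻¹) ∧
      ∃ n : ℤ, lam i * g.2.2 = n * (π / 2) := by
  obtain ⟨h₁, ⟨A, hA⟩, B, hB⟩ :=
    dot2_Jpair_rot_mem_and_isIntPair_of_mapsTo h i (x := (1, 0)) ⟨⟨1, by simp⟩, 0, by simp⟩
  obtain ⟨h₂, -⟩ :=
    dot2_Jpair_rot_mem_and_isIntPair_of_mapsTo h i (x := (0, 1)) ⟨⟨0, by simp⟩, 1, by simp⟩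
  simp only [rot, mul_one, mul_zero, sub_zero, add_zero] at hA hB
  exact ⟨mem_prod_of_dot2_Jpair_rot_mem hA hB h₁ h₂, exists_int_mul_pi_div_two_of_cos_sin hA hB⟩

section Osc2

variable {p q : ℕ}

lemma lam2_zero : lam2 p q 0 = 1 := rfl

lemma lam2_one : lam2 p q 1 = p / q := rfl

lemma lam2_mul_int_mul (hq : q ≠ 0) (i : Fin 2) (m : ℤ) (T : ℝ) :
    ∃ n : ℤ, lam2 p q i * (m * (q * T)) = n * T := by
  match i with
  | 0 => exact ⟨m * q, by rw [lam2_zero]; push_cast; ring⟩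
  | 1 => exact ⟨m * p, by rw [lam2_one]; push_cast; field_simp⟩

lemma rot_lam2_mul_period (hq : q ≠ 0) (i : Fin 2) (c : ℤ) (x : ℝ × ℝ) :
    rot (lam2 p q i * (c * (2 * π * q))) x = x := by
  obtain ⟨n, hn⟩ := lam2_mul_int_mul (p := p) hq i c (2 * π)
  rw [show 2 * π * q = q * (2 * π) by ring, hn, rot_int_mul_two_pi]

lemma forall_exists_lam2_mul_eq_iff (hq : q ≠ 0) (hpq : p.Coprime q) {t : ℝ} :
    (∀ i, ∃ n : ℤ, lam2 p q i * t = n * (π / 2)) ↔ ∃ m : ℤ, t = m * (q * π / 2) := by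
  constructor
  · intro h
    obtain ⟨n₀, h₀⟩ := h 0
    obtain ⟨n₁, h₁⟩ := h 1
    rw [lam2_zero, one_mul] at h₀
    rw [lam2_one] at h₁
    have hpn : (p * n₀ : ℤ) = q * n₁ := by
      rw [h₀] at h₁
      field_simp at h₁
      exact_mod_cast h₁
    obtain ⟨m, rfl⟩ := (Nat.isCoprime_iff_coprime.2 hpq.symm).dvd_of_dvd_mul_left ⟨n₁, hpn⟩
    exact ⟨m, by rw [h₀]; push_cast; ring⟩
  · rintro ⟨m, rfl⟩ i
    simpa only [mul_div_assoc] using lam2_mul_int_mul hq i m (π / 2)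

lemma oscConj_lam2_of_mem (hq : q ≠ 0) (g : OscG 2) {γ : OscG 2}
    (hγ : ∃ c : ℤ, γ.2.2 = c * (2 * π * q)) :
    oscConj (lam2 p q) g γ =
      (γ.1 + ∑ i, dot2 (g.2.1 i) (Jpair (rot (lam2 p q i * g.2.2) (γ.2.1 i))),
        fun i => rot (lam2 p q i * g.2.2) (γ.2.1 i), γ.2.2) := by
  obtain ⟨c, hc⟩ := hγ
  exact oscConj_of_rot_fix _ g γ fun i => hc ▸ rot_lam2_mul_period hq i c _

lemma mapsTo_oscConj_lamO2 (hq : q ≠ 0) {k : ℕ} {g : OscG 2}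
    (hv : ∀ i, g.2.1 i ∈ (zmultiples (2 * k : ℝ)⁻¹).prod (zmultiples (2 * k : ℝ)⁻¹))
    (ht : ∀ i, ∃ n : ℤ, lam2 p q i * g.2.2 = n * (π / 2)) :
    MapsTo (oscConj (lam2 p q) g) (LamO2 k (2 * π * q)) (LamO2 k (2 * π * q)) := by
  rintro γ ⟨hz, hu, hs⟩
  rw [oscConj_lam2_of_mem hq g hs]
  refine ⟨?_, fun i => IsIntPair.rot (ht i) (hu i), hs⟩
  rw [← mem_zmultiples_inv_iff] at hz ⊢
  exact add_mem hz (sum_mem fun i _ => dot2_Jpair_mem (hv i) (IsIntPair.rot (ht i) (hu i)))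

lemma lamO2_subset_image_oscConj (hq : q ≠ 0) {k : ℕ} {g : OscG 2}
    (hv : ∀ i, g.2.1 i ∈ (zmultiples (2 * k : ℝ)⁻¹).prod (zmultiples (2 * k : ℝ)⁻¹))
    (ht : ∀ i, ∃ n : ℤ, lam2 p q i * g.2.2 = n * (π / 2)) :
    LamO2 k (2 * π * q) ⊆ oscConj (lam2 p q) g '' LamO2 k (2 * π * q) := by
  rintro δ ⟨hz, hu, hs⟩
  have ht' : ∀ i, ∃ n : ℤ, -(lam2 p q i * g.2.2) = n * (π / 2) := fun i => by
    obtain ⟨n, hn⟩ := ht i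
    exact ⟨-n, by rw [hn]; push_cast; ring⟩
  let γ : OscG 2 := (δ.1 - ∑ i, dot2 (g.2.1 i) (Jpair (δ.2.1 i)),
    fun i => rot (-(lam2 p q i * g.2.2)) (δ.2.1 i), δ.2.2)
  have hγ : γ ∈ LamO2 k (2 * π * q) := by
    refine ⟨?_, fun i => IsIntPair.rot (ht' i) (hu i), hs⟩
    rw [← mem_zmultiples_inv_iff] at hz ⊢
    exact sub_mem hz (sum_mem fun i _ => dot2_Jpair_mem (hv i) (hu i))
  refine ⟨γ, hγ, ?_⟩
  rw [oscConj_lam2_of_mem (γ := γ) hq g hs]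
  simp only [γ, rot_rot_neg, sub_add_cancel]

end Osc2

theorem stmt_17_general (p q k : ℕ) (hq : 0 < q)
    (hpq : Nat.Coprime p q) (g : OscG 2) :
    oscConj (lam2 p q) g '' LamO2 k (2 * Real.pi * q) = LamO2 k (2 * Real.pi * q) ↔
      ((∀ i : Fin 2, ∃ m₁ m₂ : ℤ, g.2.1 i = ((m₁ : ℝ) / (2 * k), (m₂ : ℝ) / (2 * k)))
        ∧ ∃ m : ℤ, g.2.2 = m * (q * Real.pi / 2)) := by
  simp only [exists_int_div_pair_iff, ← forall_exists_lam2_mul_eq_iff hq.ne' hpq]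
  constructor
  · intro h
    have hmaps := mapsTo_iff_image_subset.2 h.subset
    exact ⟨fun i => (mem_prod_and_exists_of_mapsTo hmaps i).1,
      fun i => (mem_prod_and_exists_of_mapsTo hmaps i).2⟩
  · rintro ⟨hv, ht⟩
    exact (mapsTo_oscConj_lamO2 hq.ne' hv ht).image_subset.antisymm
      (lamO2_subset_image_oscConj hq.ne' hv ht)

/-- The normalizer of the lattice `Λ_{k,q,1} = (1/(2k))ℤ × ℤ⁴ × 2πqℤ` in
`Osc₂(1, p/q)` is `ℝ × (1/(2k))ℤ⁴ × (qπ/2)ℤ`. -/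
theorem stmt_17 (p q k : ℕ) (hp : 0 < p) (hq : 0 < q) (hk : 0 < k)
    (hpq : Nat.Coprime p q) (g : OscG 2) :
    oscConj (lam2 p q) g '' LamO2 k (2 * Real.pi * q) = LamO2 k (2 * Real.pi * q) ↔
      ((∀ i : Fin 2, ∃ m₁ m₂ : ℤ, g.2.1 i = ((m₁ : ℝ) / (2 * k), (m₂ : ℝ) / (2 * k)))
        ∧ ∃ m : ℤ, g.2.2 = m * (q * Real.pi / 2)) :=
  stmt_17_general p q k hq hpq g
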